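/- The group Alt(X) of even finitary permutations of an infinite set X is simple. -/

import Mathlib

open scoped Classical

/-- The set of 3-cycles of a type `X`, written as products of two transpositions. -/
def threeCycles (X : Type) : Set (Equiv.Perm X) :=
  {σ | ∃ a b c : X, a ≠ b ∧ a ≠ c ∧ b ≠ c ∧ σ = Equiv.swap a b * Equiv.swap a c}

/-- `Alt(X)`: the group of even finitary permutations of `X`, realized as the
subgroup of `Equiv.Perm X` generated by all 3-cycles. -/
def altGroup (X : Type) : Subgroup (Equiv.Perm X) :=
  Subgroup.closure (threeCycles X)

lemma conj_threeCycles {X : Type} (π : Equiv.Perm X) :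
    (MulAut.conj π).toMonoidHom '' threeCycles X ⊆ threeCycles X := by
  rintro _ ⟨σ, ⟨a, b, c, hab, hac, hbc, rfl⟩, rfl⟩
  refine ⟨π a, π b, π c, π.injective.ne hab, π.injective.ne hac, π.injective.ne hbc, ?_⟩
  simp only [MulEquiv.coe_toMonoidHom, MulAut.conj_apply]
  rw [Equiv.swap_apply_apply π a b, Equiv.swap_apply_apply π a c]
  group

lemma altGroup_map_conj_le {X : Type} (π : Equiv.Perm X) :
    (altGroup X).map (MulAut.conj π).toMonoidHom ≤ altGroup X := by
  rw [altGroup, MonoidHom.map_closure]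
  exact Subgroup.closure_mono (conj_threeCycles π)

lemma altGroup_map_conj {X : Type} (π : Equiv.Perm X) :
    (altGroup X).map (MulAut.conj π).toMonoidHom = altGroup X := by
  refine le_antisymm (altGroup_map_conj_le π) fun σ hσ => ?_
  refine ⟨(MulAut.conj π)⁻¹ σ, ?_, by simp; group⟩
  exact altGroup_map_conj_le π⁻¹ ⟨σ, hσ, by simp⟩

/-- Conjugation of `Alt(Γ)` by the left translation `x ↦ g x`. -/
def altConjAut (Γ : Type) [Group Γ] (g : Γ) : MulAut (altGroup Γ) :=
  ((MulAut.conj (Equiv.mulLeft g : Equiv.Perm Γ)).subgroupMap (altGroup Γ)).trans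
    (MulEquiv.subgroupCongr (altGroup_map_conj _))

/-- The action of `Γ` on `Alt(Γ)` given by `(g·σ)(x) = g σ (g⁻¹ x)`. -/
def altAction (Γ : Type) [Group Γ] : Γ →* MulAut (altGroup Γ) :=
  MonoidHom.mk' (fun g => altConjAut Γ g) (by
    intro g h
    refine MulEquiv.ext fun σ => Subtype.ext ?_
    show MulAut.conj (Equiv.mulLeft (g * h)) (σ : Equiv.Perm Γ) =
      MulAut.conj (Equiv.mulLeft g) (MulAut.conj (Equiv.mulLeft h) (σ : Equiv.Perm Γ))
    rw [Equiv.mulLeft_mul, map_mul]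
    rfl)

/-!
If `σ ≠ 1` lies in a normal subgroup `N`, pick a point `a` moved by `σ` and two points `c, d`
fixed by `σ` (there are infinitely many). Conjugating the 3-cycle `π = (a d c)` by `σ` only
replaces `a` by `σ a`, so the commutator `σ π σ⁻¹ π⁻¹` is again a 3-cycle, and it lies in `N`.
Any two 3-cycles of `X` move at most six points, and inside the alternating group of a finite
set with at least five elements all 3-cycles are conjugate; hence `N` contains every 3-cycle,
and these generate `Alt(X)`.
-/

open Equiv Equiv.Perm MulAction
open scoped commutatorElement

theorem Equiv.Perm.IsThreeCycle.exists_eq_swap_mul_swap {α : Type*} [Fintype α] [DecidableEq α]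
    {g : Perm α} (hg : g.IsThreeCycle) :
    ∃ a b c, a ≠ b ∧ a ≠ c ∧ b ≠ c ∧ g = swap a b * swap a c := by
  obtain ⟨a, b, c, hab, hac, hbc, -⟩ := Finset.card_eq_three.1 hg.card_support
  obtain ⟨π, rfl⟩ := isConj_iff.1 <| isConj_iff_cycleType_eq.2 <|
    (isThreeCycle_swap_mul_swap_same hab hac hbc).trans hg.symm
  refine ⟨π a, π b, π c, π.injective.ne hab, π.injective.ne hac, π.injective.ne hbc, ?_⟩
  rw [swap_apply_apply, swap_apply_apply]
  group

section
variable {X : Type}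

theorem swap_mul_swap_mem_altGroup {a b c : X} (hab : a ≠ b) (hac : a ≠ c) (hbc : b ≠ c) :
    swap a b * swap a c ∈ altGroup X :=
  Subgroup.subset_closure ⟨a, b, c, hab, hac, hbc, rfl⟩

theorem alternatingGroup_le_comap_ofSubtype (p : X → Prop) [DecidablePred p]
    [Fintype (Subtype p)] : alternatingGroup (Subtype p) ≤ (altGroup X).comap ofSubtype := by
  rw [← closure_three_cycles_eq_alternating, Subgroup.closure_le]
  intro g hg
  obtain ⟨a, b, c, hab, hac, hbc, rfl⟩ := hg.exists_eq_swap_mul_swap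
  simpa using swap_mul_swap_mem_altGroup (Subtype.coe_injective.ne hab)
    (Subtype.coe_injective.ne hac) (Subtype.coe_injective.ne hbc)

noncomputable def altGroupOfSubtype (p : X → Prop) [DecidablePred p] [Fintype (Subtype p)] :
    alternatingGroup (Subtype p) →* altGroup X :=
  (ofSubtype.comp (alternatingGroup _).subtype).codRestrict _ fun g =>
    alternatingGroup_le_comap_ofSubtype p g.2

theorem exists_isThreeCycle_altGroupOfSubtype_eq {p : X → Prop} [DecidablePred p]
    [Fintype (Subtype p)] {a b c : X} (hab : a ≠ b) (hac : a ≠ c) (hbc : b ≠ c)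
    (ha : p a) (hb : p b) (hc : p c) :
    ∃ g : alternatingGroup (Subtype p), (g : Perm (Subtype p)).IsThreeCycle ∧
      (altGroupOfSubtype p g : Perm X) = swap a b * swap a c := by
  have h3 := isThreeCycle_swap_mul_swap_same (α := Subtype p) (a := ⟨a, ha⟩) (b := ⟨b, hb⟩)
    (c := ⟨c, hc⟩) (by simpa) (by simpa) (by simpa)
  refine ⟨⟨_, h3.mem_alternatingGroup⟩, h3, ?_⟩
  change ofSubtype (_ * _) = _
  rw [map_mul, ofSubtype_swap_eq, ofSubtype_swap_eq]

theorem isConj_of_mem_threeCycles [Infinite X] {σ τ : altGroup X}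
    (hσ : (σ : Perm X) ∈ threeCycles X) (hτ : (τ : Perm X) ∈ threeCycles X) : IsConj σ τ := by
  obtain ⟨a, b, c, hab, hac, hbc, hσ⟩ := hσ
  obtain ⟨x, y, z, hxy, hxz, hyz, hτ⟩ := hτ
  obtain ⟨s, hs, hs6⟩ := Infinite.exists_superset_card_eq {a, b, c, x, y, z} 6
    Finset.card_le_six
  obtain ⟨g, hg, hgσ⟩ := exists_isThreeCycle_altGroupOfSubtype_eq (p := (· ∈ s)) hab hac hbc
    (hs (by simp)) (hs (by simp)) (hs (by simp))
  obtain ⟨h, hh, hhτ⟩ := exists_isThreeCycle_altGroupOfSubtype_eq (p := (· ∈ s)) hxy hxz hyz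
    (hs (by simp)) (hs (by simp)) (hs (by simp))
  have := (altGroupOfSubtype _).map_isConj
    (alternatingGroup.isThreeCycle_isConj (by simp [hs6]) hg hh)
  rwa [Subtype.ext (hgσ.trans hσ.symm), Subtype.ext (hhτ.trans hτ.symm)] at this

theorem finite_compl_fixedBy_of_mem_altGroup {σ : Perm X} (hσ : σ ∈ altGroup X) :
    (fixedBy X σ)ᶜ.Finite := by
  induction hσ using Subgroup.closure_induction with
  | mem g hg =>
    obtain ⟨a, b, c, -, -, -, rfl⟩ := hg
    refine (Set.toFinite {a, b, c}).subset fun x hx => ?_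
    contrapose! hx
    simp_all [swap_apply_of_ne_of_ne]
  | one => simp
  | mul f g _ _ hf hg =>
    exact (hf.union hg).subset <| by
      rw [← Set.compl_inter]; exact Set.compl_subset_compl.2 (fixedBy_mul X f g)
  | inv f _ hf => rwa [fixedBy_inv X]

theorem commutatorElement_swap_mul_swap {σ : Perm X} {a c d : X} (hσa : σ a ≠ a)
    (hσc : σ c = c) (hσd : σ d = d) (hcd : c ≠ d) :
    ⁅σ, swap a c * swap a d⁆ = swap a d * swap a (σ a) := by
  have hconj : σ * (swap a c * swap a d) * σ⁻¹ = swap (σ a) (σ c) * swap (σ a) (σ d) := by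
    rw [swap_apply_apply, swap_apply_apply]; group
  have hac : a ≠ c := fun h => hσa (h ▸ hσc)
  have had : a ≠ d := fun h => hσa (h ▸ hσd)
  have hσac : σ a ≠ c := fun h => hac (σ.injective (h.trans hσc.symm))
  have hσad : σ a ≠ d := fun h => had (σ.injective (h.trans hσd.symm))
  rw [commutatorElement_def, hconj, hσc, hσd]
  ext x
  simp only [mul_inv_rev, swap_inv, Perm.mul_apply, swap_apply_def]
  grind

theorem Subgroup.Normal.exists_mem_threeCycles_of_ne_bot [Infinite X]
    {N : Subgroup (altGroup X)} (hN : N.Normal) (hN_ne : N ≠ ⊥) :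
    ∃ σ ∈ N, (σ : Perm X) ∈ threeCycles X := by
  obtain ⟨⟨σ, hσN⟩, hσ1⟩ := Subgroup.ne_bot_iff_exists_ne_one.1 hN_ne
  obtain ⟨a, ha⟩ : ∃ a, (σ : Perm X) a ≠ a := by
    by_contra! h
    exact hσ1 (Subtype.ext (Subtype.ext (Equiv.ext h)))
  obtain ⟨t, ht, ht2⟩ :=
    (finite_compl_fixedBy_of_mem_altGroup σ.2).infinite_compl.exists_subset_card_eq 2
  obtain ⟨c, d, hcd, rfl⟩ := Finset.card_eq_two.1 ht2
  have hc : (σ : Perm X) c = c := by simpa using ht (by simp)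
  have hd : (σ : Perm X) d = d := by simpa using ht (by simp)
  have hac : a ≠ c := fun h => ha (h ▸ hc)
  have had : a ≠ d := fun h => ha (h ▸ hd)
  refine ⟨⁅σ, ⟨_, swap_mul_swap_mem_altGroup hac had hcd⟩⁆,
    Subgroup.commutator_le_left N ⊤ (Subgroup.commutator_mem_commutator hσN trivial), ?_⟩
  have hdσa : d ≠ (σ : Perm X) a := fun h => had ((σ : Perm X).injective (hd.trans h)).symm
  exact ⟨a, d, _, had, ha.symm, hdσa, commutatorElement_swap_mul_swap ha hc hd hcd⟩

instance [Infinite X] : Nontrivial (altGroup X) := by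
  let f := Infinite.natEmbedding X
  have h3 : f 0 ≠ f 1 ∧ f 0 ≠ f 2 ∧ f 1 ≠ f 2 := by simp
  refine ⟨⟨⟨_, swap_mul_swap_mem_altGroup h3.1 h3.2.1 h3.2.2⟩, 1, fun h => h3.2.1 ?_⟩⟩
  simpa [swap_apply_of_ne_of_ne h3.2.1.symm h3.2.2.symm] using congr(($h : Perm X) (f 0))

theorem eq_top_of_forall_threeCycles_mem {N : Subgroup (altGroup X)}
    (hN : ∀ σ : altGroup X, (σ : Perm X) ∈ threeCycles X → σ ∈ N) : N = ⊤ := by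
  have h := (Subgroup.closure_closure_coe_preimage (k := threeCycles X)).ge
  exact eq_top_iff.2 (h.trans ((Subgroup.closure_le _).2 hN))

end

theorem altGroup_isSimpleGroup (X : Type) [Infinite X] :
    IsSimpleGroup (altGroup X) := by
  refine ⟨fun N hN => or_iff_not_imp_left.2 fun hN_ne => ?_⟩
  obtain ⟨σ, hσN, hσ⟩ := hN.exists_mem_threeCycles_of_ne_bot hN_ne
  refine eq_top_of_forall_threeCycles_mem fun τ hτ => ?_
  obtain ⟨g, rfl⟩ := isConj_iff.1 (isConj_of_mem_threeCycles hσ hτ)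
  exact hN.conj_mem σ hσN g
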